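/- Let A be a static constant game, π either player, and Γ and Δ legal runs of ⫰ᵀA such that Δ is a π-delay of Γ. If Γ is a π-won run of ⫰ᵀA, then Δ is a π-won run of ⫰ᵀA. -/

import Mathlib

/-!
Who wins a legal run `Γ` of `⫰ᵀA` is decided by the switch moves of `Γ` (whether there
are finitely many, and the branch `t` they select) and by the winner of `Γ^{≼t}` in `A`.
The switch moves are moves of `⊥`, so they are read off the `⊥`-subsequence, which a delay
does not change; hence `Γ` and its `π`-delay `Δ` select the same branch `t`. Extracting
`Γ^{≼t}` is a filter that keeps labels, so it preserves both the player subsequences and the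
relative order of the kept moves: `Δ^{≼t}` is a `π`-delay of `Γ^{≼t}`, and staticity of `A`
transfers the win. For `π = ⊤` staticity is applied to `⊤`-won runs, using that every run
of `A` is won by exactly one player.
-/

/-- The two players: `top` (⊤, the machine) and `bot` (⊥, the environment). -/
inductive Player : Type
  | top : Player
  | bot : Player
deriving DecidableEq

/-- The adversary (opposite) of a player. -/
def Player.opp : Player → Player
  | .top => .bot
  | .bot => .top

/-- Symbols of the fixed move alphabet: the bits `0` and `1`, the period `.`,
the colon `:`, and (countably many) other characters. -/
inductive CSym : Type
  | b0 : CSym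
  | b1 : CSym
  | dot : CSym
  | colon : CSym
  | ch : ℕ → CSym
deriving DecidableEq

/-- A move is a finite string over the fixed alphabet. -/
abbrev Move := List CSym

/-- A labmove is a move together with the label of the player who made it. -/
abbrev Labmove := Player × Move

/-- A run is a finite or infinite sequence of labmoves. -/
abbrev Run := Stream'.Seq Labmove

/-- A position is a finite run. -/
abbrev Position := List Labmove

/-- The symbol encoding a bit. -/
def bitSym (b : Bool) : CSym := if b then .b1 else .b0

/-- The move that is the bare bitstring `w`. -/
def bitsMove (w : List Bool) : Move := w.map bitSym

/-- The (replicative-style) move `w:`. -/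
def repMove (w : List Bool) : Move := bitsMove w ++ [.colon]

/-- The (non-replicative-style) move `w.α`. -/
def dotMove (w : List Bool) (α : Move) : Move := bitsMove w ++ (.dot :: α)

/-- Decode a move that is a bare bitstring. -/
def asBits : Move → Option (List Bool)
  | [] => some []
  | .b0 :: r => (asBits r).map (false :: ·)
  | .b1 :: r => (asBits r).map (true :: ·)
  | _ => none

/-- Decode a move of the form `w:` (`w` a bitstring). -/
def asRep : Move → Option (List Bool)
  | [.colon] => some []
  | .b0 :: r => (asRep r).map (false :: ·)
  | .b1 :: r => (asRep r).map (true :: ·)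
  | _ => none

/-- Decode a move of the form `w.α` (`w` a bitstring, `α` a move), splitting at
the (unique such) period. -/
def splitDot : Move → Option (List Bool × Move)
  | .dot :: r => some ([], r)
  | .b0 :: r => (splitDot r).map (fun p => (false :: p.1, p.2))
  | .b1 :: r => (splitDot r).map (fun p => (true :: p.1, p.2))
  | _ => none

/-- Infinite bitstrings. -/
abbrev IStr := ℕ → Bool

/-- The length-`n` initial segment of an infinite bitstring. -/
def prefOf (n : ℕ) (v : IStr) : List Bool := (List.range n).map v

/-- `u` is a finite initial segment of the infinite bitstring `v`. -/
def IsPref (u : List Bool) (v : IStr) : Prop := u = prefOf u.length v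

instance (u : List Bool) (v : IStr) : Decidable (IsPref u v) := by
  unfold IsPref; infer_instance

/-- The finite bitstring `w` with infinitely many `0`s appended. -/
def ezero (w : List Bool) : IStr := fun i => w.getD i false

/-- The finite bitstring `w` followed by the infinite bitstring `v`. -/
def capp (w : List Bool) (v : IStr) : IStr :=
  fun i => if i < w.length then w.getD i false else v (i - w.length)

/-- The indices of `s` whose entry is kept by the filtering function `p`. -/
def fmPred {α β : Type*} (p : α → Option β) (s : Stream'.Seq α) (i : ℕ) : Prop :=
  ∃ a, s.get? i = some a ∧ (p a).isSome

/-- `p` has at least `n+1` witnesses. -/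
def HasNth (p : ℕ → Prop) (n : ℕ) : Prop :=
  ∀ hf : (setOf p).Finite, n < hf.toFinset.card

open Classical in
/-- The subsequence of a (finite or infinite) sequence obtained by
filtering/translating its entries through `p`. -/
noncomputable def seqFilterMap {α β : Type*} (p : α → Option β) (s : Stream'.Seq α) :
    Stream'.Seq β := by
  refine ⟨fun k => if HasNth (fmPred p s) k
    then ((s.get? (Nat.nth (fmPred p s) k)).bind p) else none, ?_⟩
  intro n hn
  have hval : ∀ k, HasNth (fmPred p s) k →
      (if HasNth (fmPred p s) k then ((s.get? (Nat.nth (fmPred p s) k)).bind p) else none)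
        ≠ none := by
    intro k hk
    obtain ⟨a, ha, hpa⟩ := Nat.nth_mem (p := fmPred p s) k hk
    rw [if_pos hk, ha]
    simpa [Option.isSome_iff_ne_none] using hpa
  by_cases h : HasNth (fmPred p s) (n + 1)
  · exact absurd hn (hval n (fun hf => lt_of_le_of_lt (Nat.le_succ n) (h hf)))
  · exact if_neg h

/-- The filtered subsequence of a position (finite-run analogue of `seqFilterMap`). -/
def listFilterMap {β : Type*} (p : Labmove → Option β) (Φ : Position) : List β :=
  Φ.filterMap p

/-- The filtering function for `Ω^{≼v}`: keep labmoves `π u.α` with `u` an initial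
segment of `v`, turning them into `π α`. -/
def subFn (v : IStr) (lm : Labmove) : Option Labmove :=
  match splitDot lm.2 with
  | some (u, α) => if IsPref u v then some (lm.1, α) else none
  | none => none

/-- `Ω^{≼v}` for a run `Ω`. -/
noncomputable def subAt (v : IStr) (Γ : Run) : Run := seqFilterMap (subFn v) Γ

/-- `Φ^{≼v}` for a position `Φ`. -/
def subAtL (v : IStr) (Φ : Position) : Position := Φ.filterMap (subFn v)

/-- The result of changing every label in a run to its opposite. -/
def negRun (Γ : Run) : Run := Γ.map (fun lm => (lm.1.opp, lm.2))

/-- The subsequence of `π`-labeled moves of a run. -/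
noncomputable def subseqOf (π : Player) (Γ : Run) : Run :=
  seqFilterMap (fun lm => if lm.1 = π then some lm else none) Γ

/-- The subsequence of `π`-labeled moves of a position. -/
def subL (π : Player) (Φ : Position) : Position :=
  Φ.filter (fun lm => decide (lm.1 = π))

/-- The indices of the `π`-labeled moves of a run. -/
def labPred (π : Player) (Γ : Run) (i : ℕ) : Prop := ∃ m, Γ.get? i = some (π, m)

/-- `Δ` is a `π`-delay of `Γ`: (1) for both players `π'`, the subsequence of
`π'`-labeled moves of `Δ` is identical to that of `Γ`; (2) whenever the `n`-th
`π`-labeled move is made later than the `k`-th `¬π`-labeled move in `Γ`, so is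
it in `Δ`. -/
def Delay (π : Player) (Δ Γ : Run) : Prop :=
  (∀ π' : Player, subseqOf π' Δ = subseqOf π' Γ) ∧
  (∀ n k : ℕ, HasNth (labPred π Γ) n → HasNth (labPred π.opp Γ) k →
    Nat.nth (labPred π Γ) n > Nat.nth (labPred π.opp Γ) k →
    Nat.nth (labPred π Δ) n > Nat.nth (labPred π.opp Δ) k)

/-- A constant game: a set of legal runs and an assignment of winners. -/
structure Game where
  legal : Run → Prop
  wins : Run → Player

/-- Well-formedness of a constant game: the empty position is legal, and a run
is legal iff all of its finite initial segments are. -/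
def Game.IsGame (A : Game) : Prop :=
  A.legal (Stream'.Seq.ofList []) ∧
  ∀ Γ : Run, A.legal Γ ↔ ∀ n : ℕ, A.legal (Stream'.Seq.ofList (Stream'.Seq.take n Γ))

/-- The run `Γ` is `π`-illegal in `A`: its shortest illegal initial segment has
the form `⟨Φ, πα⟩`. -/
def Game.IllegalBy (A : Game) (π : Player) (Γ : Run) : Prop :=
  ∃ n : ℕ,
    (∀ m ≤ n, A.legal (Stream'.Seq.ofList (Stream'.Seq.take m Γ))) ∧
    ¬ A.legal (Stream'.Seq.ofList (Stream'.Seq.take (n + 1) Γ)) ∧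
    ∃ m : Move, Γ.get? n = some (π, m)

/-- `Γ` is a `π`-won run of `A`: either `Γ` is legal and `Wn` names `π`, or `Γ`
is `¬π`-illegal (an illegal run is won by the adversary of the first offender). -/
def Game.won (A : Game) (π : Player) (Γ : Run) : Prop :=
  (A.legal Γ ∧ A.wins Γ = π) ∨ A.IllegalBy π.opp Γ

/-- A constant game is static iff `π`-won runs are preserved by `π`-delays. -/
def Game.Static (A : Game) : Prop :=
  ∀ (π : Player) (Γ Δ : Run), Delay π Δ Γ → A.won π Γ → A.won π Δ

/-- The negation `¬A` of a constant game: the roles of the players are interchanged. -/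
def Game.neg (A : Game) : Game where
  legal Γ := A.legal (negRun Γ)
  wins Γ := (A.wins (negRun Γ)).opp

/-- `w` is an actual node of the position `Φ`: `w` is empty, or `w = u0` or
`w = u1` for some bitstring `u` such that `Φ` contains the move `u:`. -/
def ActualNode (Φ : Position) (w : List Bool) : Prop :=
  w = [] ∨ ∃ (u : List Bool) (b : Bool), w = u ++ [b] ∧ ∃ π : Player, (π, repMove u) ∈ Φ

/-- `w` is an outer actual node of `Φ`: an actual node that is not a proper
prefix of any other actual node of `Φ`. -/
def OuterNode (Φ : Position) (w : List Bool) : Prop :=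
  ActualNode Φ w ∧ ∀ w' : List Bool, ActualNode Φ w' → w <+: w' → w = w'

/-- `m` is a legal move by `π` in the legal position `Φ` of `⫰ᵀA`: a switch
move, a replicative move, or a non-replicative move. -/
def TightMove (A : Game) (Φ : Position) (π : Player) (m : Move) : Prop :=
  (π = .bot ∧ ∃ w : List Bool, asBits m = some w ∧ ActualNode Φ w) ∨
  (π = .bot ∧ ∃ w : List Bool, asRep m = some w ∧ OuterNode Φ w) ∨
  (∃ (w : List Bool) (α : Move), splitDot m = some (w, α) ∧ ActualNode Φ w ∧
    ∀ v : IStr, A.legal (Stream'.Seq.ofList (subAtL (capp w v) Φ ++ [(π, α)])))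

/-- The legal positions of `⫰ᵀA`. -/
inductive TightLegalPos (A : Game) : Position → Prop
  | nil : TightLegalPos A []
  | snoc {Φ : Position} {π : Player} {m : Move} :
      TightLegalPos A Φ → TightMove A Φ π m → TightLegalPos A (Φ ++ [(π, m)])

/-- The indices of the switch moves (by player `π`) of a run: `π`-labeled moves
whose move part is a bare bitstring. -/
def SwSetP (π : Player) (Γ : Run) : Set ℕ :=
  {i | ∃ (m : Move) (w : List Bool), Γ.get? i = some (π, m) ∧ asBits m = some w}

open Classical in
/-- The index of the last switch move (by `π`) of a run, when there are finitely
many and at least one (junk value `0` otherwise). -/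
noncomputable def lastSwitchIdxP (π : Player) (Γ : Run) : ℕ :=
  if h : (SwSetP π Γ).Finite ∧ (SwSetP π Γ).Nonempty then
    h.1.toFinset.max' (h.1.toFinset_nonempty.mpr h.2)
  else 0

open Classical in
/-- The bitstring of the last switch move (by `π`) of a run; the empty bitstring
if there are no switch moves (or infinitely many). -/
noncomputable def lastSwitchBitsP (π : Player) (Γ : Run) : List Bool :=
  if (SwSetP π Γ).Finite ∧ (SwSetP π Γ).Nonempty then
    ((Γ.get? (lastSwitchIdxP π Γ)).bind (fun lm => asBits lm.2)).getD []
  else []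

/-- The infinite bitstring `t`: the last (`⊥`-made) switch move of `Γ` with
infinitely many `0`s appended, or the infinite string of `0`s if there are no
switch moves. -/
noncomputable def tStream (Γ : Run) : IStr := ezero (lastSwitchBitsP .bot Γ)

open Classical in
/-- The tight toggling-branching recurrence `⫰ᵀA`. -/
noncomputable def tight (A : Game) : Game where
  legal Γ := ∀ n : ℕ, TightLegalPos A (Stream'.Seq.take n Γ)
  wins Γ :=
    if (SwSetP .bot Γ).Finite ∧ A.won .bot (subAt (tStream Γ) Γ) then .bot else .top

/-- The tight toggling-branching corecurrence `⫯ᵀA = ¬⫰ᵀ¬A`. -/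
noncomputable def cotight (A : Game) : Game := Game.neg (tight (Game.neg A))

/-- The shape of legal labmoves of `⫰ᴸA`: `⊥w` (a switch move) for a bitstring
`w`, or `πw.α`. -/
def LooseShape (lm : Labmove) : Prop :=
  (lm.1 = .bot ∧ ∃ w : List Bool, asBits lm.2 = some w) ∨
  (∃ (w : List Bool) (α : Move), splitDot lm.2 = some (w, α))

open Classical in
/-- The loose toggling-branching recurrence `⫰ᴸA`. -/
noncomputable def loose (A : Game) : Game where
  legal Γ := (∀ (i : ℕ) (lm : Labmove), Γ.get? i = some lm → LooseShape lm) ∧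
    ∀ v : IStr, A.legal (subAt v Γ)
  wins Γ :=
    if (SwSetP .bot Γ).Finite ∧ A.won .bot (subAt (tStream Γ) Γ) then .bot else .top

/-- The loose toggling-branching corecurrence `⫯ᴸA = ¬⫰ᴸ¬A`. -/
noncomputable def coloose (A : Game) : Game := Game.neg (loose (Game.neg A))

/-- The sequence of (bitstrings of) switch moves made by `π` in a run, in order. -/
noncomputable def swSeq (π : Player) (Γ : Run) : Stream'.Seq (List Bool) :=
  seqFilterMap (fun lm => if lm.1 = π then asBits lm.2 else none) Γ

/-- The move `i.α` (component prefix for parallel combinations). -/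
def compMove (i : ℕ) (α : Move) : Move := .ch i :: .dot :: α

/-- `Δ^{i.}`: the labmoves of the form `π i.α` of `Δ`, with the prefix `i.` removed. -/
noncomputable def proj (i : ℕ) (Δ : Run) : Run :=
  seqFilterMap (fun lm =>
    match lm.2 with
    | .ch j :: .dot :: α => if j = i then some (lm.1, α) else none
    | _ => none) Δ

open Classical in
/-- The parallel disjunction `A ∨ B`. -/
noncomputable def Game.por (A B : Game) : Game where
  legal Δ :=
    (∀ (k : ℕ) (lm : Labmove), Δ.get? k = some lm →
      ∃ (i : ℕ) (α : Move), (i = 1 ∨ i = 2) ∧ lm.2 = compMove i α) ∧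
    A.legal (proj 1 Δ) ∧ B.legal (proj 2 Δ)
  wins Δ :=
    if A.won .top (proj 1 Δ) ∨ B.won .top (proj 2 Δ) then .top else .bot

open Classical

theorem hasNth_count {p : ℕ → Prop} {x : ℕ} (hx : p x) : HasNth p (Nat.count p x) :=
  fun hf => Nat.count_lt_card hf hx

theorem Nat.count_lt_count_iff {p : ℕ → Prop} [DecidablePred p] {a b : ℕ} (ha : p a) :
    Nat.count p a < Nat.count p b ↔ a < b :=
  ⟨Nat.lt_of_count_lt_count, Nat.count_strict_mono ha⟩

section ImageCount

/- In the hypotheses below, `P` is `C ⊆ Q` renumbered by the positions of its elements in `Q`: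
this is how the indices kept by a filter look in the filtered sequence. -/
variable {Q C P : ℕ → Prop}

theorem count_count_of_image_count (hCQ : ∀ x, C x → Q x)
    (hP : ∀ x, P x ↔ ∃ y, C y ∧ Nat.count Q y = x) (i : ℕ) :
    Nat.count P (Nat.count Q i) = Nat.count C i := by
  induction i with
  | zero => simp
  | succ i ih =>
    by_cases hQ : Q i
    · have hPC : P (Nat.count Q i) ↔ C i :=
        ⟨fun h => by
          obtain ⟨y, hy, hcy⟩ := (hP _).1 h
          exact Nat.count_injective (hCQ y hy) hQ hcy ▸ hy,
        fun hC => (hP _).2 ⟨i, hC, rfl⟩⟩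
      simp [Nat.count_succ, hQ, hPC, ih]
    · have hC : ¬ C i := fun h => hQ (hCQ i h)
      simp [Nat.count_succ, hQ, hC, ih]

theorem hasNth_iff_of_image_count (hCQ : ∀ x, C x → Q x)
    (hP : ∀ x, P x ↔ ∃ y, C y ∧ Nat.count Q y = x) (n : ℕ) :
    HasNth P n ↔ HasNth C n := by
  constructor
  · intro h
    obtain ⟨y, hy, hcy⟩ := (hP _).1 (Nat.nth_mem n h)
    have hn : Nat.count C y = n := by
      rw [← count_count_of_image_count hCQ hP y, hcy, Nat.count_nth h]
    exact hn ▸ hasNth_count hy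
  · intro h
    have hn : Nat.count P (Nat.count Q (Nat.nth C n)) = n := by
      rw [count_count_of_image_count hCQ hP, Nat.count_nth h]
    exact hn ▸ hasNth_count ((hP _).2 ⟨_, Nat.nth_mem n h, rfl⟩)

theorem nth_of_image_count (hCQ : ∀ x, C x → Q x)
    (hP : ∀ x, P x ↔ ∃ y, C y ∧ Nat.count Q y = x) {n : ℕ} (h : HasNth C n) :
    Nat.nth P n = Nat.count Q (Nat.nth C n) := by
  have hn : Nat.count P (Nat.count Q (Nat.nth C n)) = n := by
    rw [count_count_of_image_count hCQ hP, Nat.count_nth h]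
  conv_lhs => rw [← hn]
  exact Nat.nth_count ((hP _).2 ⟨_, Nat.nth_mem n h, rfl⟩)

end ImageCount

section SeqFilterMap

variable {α β γ : Type*}

theorem get?_seqFilterMap_eq_some_iff (p : α → Option β) (s : Stream'.Seq α) (j : ℕ)
    (b : β) :
    (seqFilterMap p s).get? j = some b ↔ ∃ i a, s.get? i = some a ∧ p a = some b ∧
      fmPred p s i ∧ Nat.count (fmPred p s) i = j := by
  change (if HasNth (fmPred p s) j then _ else none) = some b ↔ _
  constructor
  · intro h
    split_ifs at h with hj
    obtain ⟨a, ha, hb⟩ := Option.bind_eq_some_iff.1 h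
    exact ⟨_, a, ha, hb, Nat.nth_mem j hj, Nat.count_nth hj⟩
  · rintro ⟨i, a, ha, hb, hi, rfl⟩
    rw [if_pos (hasNth_count hi), Nat.nth_count hi, ha]
    exact hb

theorem isSome_get?_seqFilterMap_iff (p : α → Option β) (s : Stream'.Seq α) (j : ℕ) :
    ((seqFilterMap p s).get? j).isSome ↔ HasNth (fmPred p s) j := by
  change (if HasNth (fmPred p s) j then _ else none).isSome ↔ _
  split_ifs with hj
  · obtain ⟨a, ha, hpa⟩ := Nat.nth_mem j hj
    simpa [ha, hj] using hpa
  · simpa using hj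

theorem fmPred_of_fmPred_bind (q : α → Option β) (p : β → Option γ) (s : Stream'.Seq α) :
    ∀ y, fmPred (fun a => (q a).bind p) s y → fmPred q s y := by
  rintro y ⟨a, ha, h⟩
  exact ⟨a, ha, Option.isSome_of_isSome_bind h⟩

theorem fmPred_seqFilterMap_iff (q : α → Option β) (p : β → Option γ) (s : Stream'.Seq α)
    (x : ℕ) :
    fmPred p (seqFilterMap q s) x ↔
      ∃ y, fmPred (fun a => (q a).bind p) s y ∧ Nat.count (fmPred q s) y = x := by
  constructor
  · rintro ⟨b, hb, hpb⟩
    obtain ⟨y, a, ha, hqa, -, hcy⟩ := (get?_seqFilterMap_eq_some_iff q s x b).1 hb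
    exact ⟨y, ⟨a, ha, by simp [hqa, hpb]⟩, hcy⟩
  · rintro ⟨y, ⟨a, ha, hsome⟩, hcy⟩
    obtain ⟨b, hqa, hpb⟩ : ∃ b, q a = some b ∧ (p b).isSome := by
      cases hq : q a <;> simp_all
    have hy : fmPred q s y := ⟨a, ha, by simp [hqa]⟩
    exact ⟨b, (get?_seqFilterMap_eq_some_iff q s x b).2 ⟨y, a, ha, hqa, hy, hcy⟩, hpb⟩

theorem seqFilterMap_seqFilterMap (q : α → Option β) (p : β → Option γ)
    (s : Stream'.Seq α) :
    seqFilterMap p (seqFilterMap q s) = seqFilterMap (fun a => (q a).bind p) s := by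
  have hcount :=
    count_count_of_image_count (fmPred_of_fmPred_bind q p s) (fmPred_seqFilterMap_iff q p s)
  refine Stream'.Seq.ext fun j => Option.ext fun c => ?_
  rw [get?_seqFilterMap_eq_some_iff, get?_seqFilterMap_eq_some_iff]
  constructor
  · rintro ⟨x, b, hb, hpb, -, rfl⟩
    obtain ⟨y, a, ha, hqa, -, rfl⟩ := (get?_seqFilterMap_eq_some_iff q s x b).1 hb
    exact ⟨y, a, ha, by simp [hqa, hpb], ⟨a, ha, by simp [hqa, hpb]⟩, (hcount y).symm⟩
  · rintro ⟨y, a, ha, hbind, hy, rfl⟩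
    obtain ⟨b, hqa, hpb⟩ := Option.bind_eq_some_iff.1 hbind
    have hqy : fmPred q s y := ⟨a, ha, by simp [hqa]⟩
    exact ⟨_, b, (get?_seqFilterMap_eq_some_iff q s _ b).2 ⟨y, a, ha, hqa, hqy, rfl⟩, hpb,
      (fmPred_seqFilterMap_iff q p s _).2 ⟨y, hy, rfl⟩, hcount y⟩

end SeqFilterMap

def moveFilter (f : Move → Option Move) (lm : Labmove) : Option Labmove :=
  (f lm.2).map (lm.1, ·)

def labelFilter (π : Player) (lm : Labmove) : Option Labmove :=
  if lm.1 = π then some lm else none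

def subMove (v : IStr) (m : Move) : Option Move :=
  match splitDot m with
  | some (u, α) => if IsPref u v then some α else none
  | none => none

def keptMoves (f : Move → Option Move) (ρ : Player) (X : Run) (y : ℕ) : Prop :=
  ∃ m, X.get? y = some (ρ, m) ∧ (f m).isSome

theorem subFn_eq_moveFilter (v : IStr) : subFn v = moveFilter (subMove v) := by
  funext lm
  unfold subFn moveFilter subMove
  rcases splitDot lm.2 with _ | ⟨u, α⟩
  · rfl
  · by_cases h : IsPref u v <;> simp [h]

theorem subseqOf_eq_seqFilterMap_labelFilter (π : Player) (Γ : Run) :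
    subseqOf π Γ = seqFilterMap (labelFilter π) Γ := rfl

theorem fmPred_labelFilter (π : Player) (Γ : Run) :
    fmPred (labelFilter π) Γ = labPred π Γ := by
  funext i
  apply propext
  constructor
  · rintro ⟨⟨ρ, m⟩, ha, h⟩
    obtain rfl : ρ = π := by by_contra hne; simp [labelFilter, hne] at h
    exact ⟨m, ha⟩
  · rintro ⟨m, hm⟩
    exact ⟨(π, m), hm, by simp [labelFilter]⟩

theorem labelFilter_bind_moveFilter (f : Move → Option Move) (π : Player) (a : Labmove) :
    (labelFilter π a).bind (moveFilter f) = (moveFilter f a).bind (labelFilter π) := by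
  unfold moveFilter labelFilter
  by_cases h : a.1 = π <;> cases hf : f a.2 <;> simp [h, hf]

theorem fmPred_labelFilter_bind_moveFilter (f : Move → Option Move) (π : Player) (X : Run) :
    fmPred (fun a => (labelFilter π a).bind (moveFilter f)) X = keptMoves f π X := by
  funext y
  apply propext
  constructor
  · rintro ⟨⟨ρ, m⟩, ha, h⟩
    by_cases hρ : ρ = π
    · subst hρ
      exact ⟨m, ha, by simpa [labelFilter, moveFilter] using h⟩
    · simp [labelFilter, hρ] at h
  · rintro ⟨m, hm, h⟩
    exact ⟨(π, m), hm, by simpa [labelFilter, moveFilter] using h⟩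

theorem subseqOf_seqFilterMap_moveFilter (f : Move → Option Move) (π : Player) (Γ : Run) :
    subseqOf π (seqFilterMap (moveFilter f) Γ) =
      seqFilterMap (moveFilter f) (subseqOf π Γ) := by
  simp only [subseqOf_eq_seqFilterMap_labelFilter, seqFilterMap_seqFilterMap,
    labelFilter_bind_moveFilter]

section KeptMoves

variable (f : Move → Option Move) (ρ : Player) (X : Run)

theorem fmPred_of_keptMoves : ∀ y, keptMoves f ρ X y → fmPred (moveFilter f) X y := by
  rintro y ⟨m, hm, h⟩
  exact ⟨(ρ, m), hm, by simpa [moveFilter] using h⟩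

theorem labPred_of_keptMoves : ∀ y, keptMoves f ρ X y → labPred ρ X y := by
  rintro y ⟨m, hm, -⟩
  exact ⟨m, hm⟩

theorem labPred_seqFilterMap_iff (x : ℕ) :
    labPred ρ (seqFilterMap (moveFilter f) X) x ↔
      ∃ y, keptMoves f ρ X y ∧ Nat.count (fmPred (moveFilter f) X) y = x := by
  simp only [← fmPred_labelFilter, fmPred_seqFilterMap_iff, ← labelFilter_bind_moveFilter,
    fmPred_labelFilter_bind_moveFilter]

theorem fmPred_subseqOf_iff (x : ℕ) :
    fmPred (moveFilter f) (subseqOf ρ X) x ↔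
      ∃ y, keptMoves f ρ X y ∧ Nat.count (labPred ρ X) y = x := by
  simp only [subseqOf_eq_seqFilterMap_labelFilter, fmPred_seqFilterMap_iff,
    fmPred_labelFilter_bind_moveFilter, fmPred_labelFilter]

theorem hasNth_labPred_seqFilterMap_iff (n : ℕ) :
    HasNth (labPred ρ (seqFilterMap (moveFilter f) X)) n ↔ HasNth (keptMoves f ρ X) n :=
  hasNth_iff_of_image_count (fmPred_of_keptMoves f ρ X) (labPred_seqFilterMap_iff f ρ X) n

theorem hasNth_keptMoves_iff (n : ℕ) :
    HasNth (keptMoves f ρ X) n ↔ HasNth (fmPred (moveFilter f) (subseqOf ρ X)) n :=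
  (hasNth_iff_of_image_count (labPred_of_keptMoves f ρ X) (fmPred_subseqOf_iff f ρ X) n).symm

variable {f ρ X}

theorem nth_keptMoves {n : ℕ} (h : HasNth (keptMoves f ρ X) n) :
    Nat.nth (keptMoves f ρ X) n =
      Nat.nth (labPred ρ X) (Nat.nth (fmPred (moveFilter f) (subseqOf ρ X)) n) := by
  rw [nth_of_image_count (labPred_of_keptMoves f ρ X) (fmPred_subseqOf_iff f ρ X) h,
    Nat.nth_count (labPred_of_keptMoves f ρ X _ (Nat.nth_mem n h))]

theorem hasNth_labPred_nth_fmPred_subseqOf {n : ℕ} (h : HasNth (keptMoves f ρ X) n) :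
    HasNth (labPred ρ X) (Nat.nth (fmPred (moveFilter f) (subseqOf ρ X)) n) := by
  rw [nth_of_image_count (labPred_of_keptMoves f ρ X) (fmPred_subseqOf_iff f ρ X) h]
  exact hasNth_count (labPred_of_keptMoves f ρ X _ (Nat.nth_mem n h))

/-- The right-hand side sees the filter only through the subsequences of `X`, which a delay
leaves unchanged. -/
theorem nth_labPred_seqFilterMap_lt_iff {σ : Player} {k n : ℕ}
    (hk : HasNth (keptMoves f σ X) k) (hn : HasNth (keptMoves f ρ X) n) :
    Nat.nth (labPred σ (seqFilterMap (moveFilter f) X)) k <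
        Nat.nth (labPred ρ (seqFilterMap (moveFilter f) X)) n ↔
      Nat.nth (labPred σ X) (Nat.nth (fmPred (moveFilter f) (subseqOf σ X)) k) <
        Nat.nth (labPred ρ X) (Nat.nth (fmPred (moveFilter f) (subseqOf ρ X)) n) := by
  rw [nth_of_image_count (fmPred_of_keptMoves f σ X) (labPred_seqFilterMap_iff f σ X) hk,
    nth_of_image_count (fmPred_of_keptMoves f ρ X) (labPred_seqFilterMap_iff f ρ X) hn,
    Nat.count_lt_count_iff (fmPred_of_keptMoves f σ X _ (Nat.nth_mem k hk)),
    nth_keptMoves hk, nth_keptMoves hn]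

end KeptMoves

theorem Delay.seqFilterMap_moveFilter {π : Player} {Δ Γ : Run} (hd : Delay π Δ Γ)
    (f : Move → Option Move) :
    Delay π (seqFilterMap (moveFilter f) Δ) (seqFilterMap (moveFilter f) Γ) := by
  refine ⟨fun π' => by simp only [subseqOf_seqFilterMap_moveFilter, hd.1 π'], ?_⟩
  intro n k hn hk hgt
  rw [hasNth_labPred_seqFilterMap_iff] at hn hk
  have hnΔ : HasNth (keptMoves f π Δ) n := by
    rw [hasNth_keptMoves_iff, hd.1 π, ← hasNth_keptMoves_iff]; exact hn
  have hkΔ : HasNth (keptMoves f π.opp Δ) k := by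
    rw [hasNth_keptMoves_iff, hd.1 π.opp, ← hasNth_keptMoves_iff]; exact hk
  rw [gt_iff_lt, nth_labPred_seqFilterMap_lt_iff hk hn] at hgt
  rw [gt_iff_lt, nth_labPred_seqFilterMap_lt_iff hkΔ hnΔ, hd.1 π, hd.1 π.opp]
  exact hd.2 _ _ (hasNth_labPred_nth_fmPred_subseqOf hn) (hasNth_labPred_nth_fmPred_subseqOf hk) hgt

theorem Delay.subAt {π : Player} {Δ Γ : Run} (hd : Delay π Δ Γ) (v : IStr) :
    Delay π (subAt v Δ) (subAt v Γ) := by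
  simpa only [_root_.subAt, subFn_eq_moveFilter] using hd.seqFilterMap_moveFilter (subMove v)

section HasNthSet

variable {S T : Set ℕ}

theorem finite_iff_exists_not_hasNth : S.Finite ↔ ∃ n, ¬ HasNth (· ∈ S) n :=
  ⟨fun hf => ⟨_, fun h => lt_irrefl _ (h hf)⟩,
    fun ⟨_, hn⟩ => by_contra fun h => hn (absurd · h)⟩

theorem hasNth_zero_iff_nonempty : HasNth (· ∈ S) 0 ↔ S.Nonempty := by
  constructor
  · intro h
    by_cases hf : S.Finite
    · obtain ⟨x, hx⟩ := Finset.card_pos.1 (h hf)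
      exact ⟨x, hf.mem_toFinset.1 hx⟩
    · exact Set.Infinite.nonempty hf
  · rintro ⟨x, hx⟩ hf
    exact Finset.card_pos.2 ⟨x, hf.mem_toFinset.2 hx⟩

theorem hasNth_iff_lt_ncard (hf : S.Finite) (n : ℕ) : HasNth (· ∈ S) n ↔ n < S.ncard := by
  rw [Set.ncard_eq_toFinset_card S hf]
  exact ⟨fun h => h hf, fun h _ => h⟩

theorem ncard_eq_of_hasNth_iff (h : ∀ n, HasNth (· ∈ S) n ↔ HasNth (· ∈ T) n) :
    S.ncard = T.ncard := by
  have hfin : S.Finite ↔ T.Finite := by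
    simp only [finite_iff_exists_not_hasNth, h]
  by_cases hS : S.Finite
  · refine eq_of_forall_lt_iff fun n => ?_
    rw [← hasNth_iff_lt_ncard hS, ← hasNth_iff_lt_ncard (hfin.1 hS), h]
  · rw [Set.Infinite.ncard hS, Set.Infinite.ncard (mt hfin.2 hS)]

theorem count_max'_eq_ncard_sub_one [DecidablePred (· ∈ S)] (hf : S.Finite)
    (hne : hf.toFinset.Nonempty) : Nat.count (· ∈ S) (hf.toFinset.max' hne) = S.ncard - 1 := by
  rw [Nat.count_eq_card_filter_range, Set.ncard_eq_toFinset_card S hf,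
    ← Finset.card_erase_of_mem (hf.toFinset.max'_mem hne)]
  congr 1
  ext x
  simp only [Finset.mem_filter, Finset.mem_range, Finset.mem_erase, Set.Finite.mem_toFinset]
  exact ⟨fun ⟨hx, hS⟩ => ⟨hx.ne, hS⟩,
    fun ⟨hx, hS⟩ => ⟨(Finset.le_max' _ x (hf.mem_toFinset.2 hS)).lt_of_ne hx, hS⟩⟩

end HasNthSet

def switchFilter (π : Player) (lm : Labmove) : Option (List Bool) :=
  if lm.1 = π then asBits lm.2 else none

section Switch

variable (π : Player)

theorem swSeq_eq_seqFilterMap_subseqOf (Γ : Run) :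
    swSeq π Γ = seqFilterMap (fun lm : Labmove => asBits lm.2) (subseqOf π Γ) := by
  rw [subseqOf_eq_seqFilterMap_labelFilter, seqFilterMap_seqFilterMap]
  show seqFilterMap (switchFilter π) Γ = _
  congr 1
  funext lm
  unfold labelFilter switchFilter
  split_ifs <;> rfl

theorem fmPred_switchFilter (Γ : Run) : fmPred (switchFilter π) Γ = (· ∈ SwSetP π Γ) := by
  funext i
  apply propext
  constructor
  · rintro ⟨⟨ρ, m⟩, hm, hs⟩
    by_cases hρ : ρ = π
    · subst hρ
      obtain ⟨w, hw⟩ := Option.isSome_iff_exists.1 (by simpa [switchFilter] using hs)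
      exact ⟨m, w, hm, hw⟩
    · simp [switchFilter, hρ] at hs
  · rintro ⟨m, w, hm, hw⟩
    exact ⟨(π, m), hm, by simp [switchFilter, hw]⟩

theorem hasNth_SwSetP_congr {Δ Γ : Run} (h : swSeq π Δ = swSeq π Γ) (n : ℕ) :
    HasNth (· ∈ SwSetP π Δ) n ↔ HasNth (· ∈ SwSetP π Γ) n := by
  have h' : seqFilterMap (switchFilter π) Δ = seqFilterMap (switchFilter π) Γ := h
  rw [← fmPred_switchFilter, ← fmPred_switchFilter, ← isSome_get?_seqFilterMap_iff,
    ← isSome_get?_seqFilterMap_iff, h']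

theorem get?_swSeq_ncard_sub_one {Γ : Run} (hf : (SwSetP π Γ).Finite)
    (hne : (SwSetP π Γ).Nonempty) :
    (swSeq π Γ).get? ((SwSetP π Γ).ncard - 1) = some (lastSwitchBitsP π Γ) := by
  have hc : (SwSetP π Γ).Finite ∧ (SwSetP π Γ).Nonempty := ⟨hf, hne⟩
  have hidx : lastSwitchIdxP π Γ = hf.toFinset.max' (hf.toFinset_nonempty.mpr hne) := by
    rw [lastSwitchIdxP, dif_pos hc]
  have hmem : lastSwitchIdxP π Γ ∈ SwSetP π Γ := by
    rw [hidx]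
    exact hf.mem_toFinset.1 (Finset.max'_mem _ _)
  obtain ⟨m, w, hm, hw⟩ := hmem
  have hlast : lastSwitchBitsP π Γ = w := by
    rw [lastSwitchBitsP, if_pos hc, hm]
    simp [hw]
  have hcount : Nat.count (fmPred (switchFilter π) Γ) (lastSwitchIdxP π Γ) =
      (SwSetP π Γ).ncard - 1 := by
    rw [fmPred_switchFilter, hidx, count_max'_eq_ncard_sub_one]
  rw [hlast]
  exact (get?_seqFilterMap_eq_some_iff _ Γ _ w).2 ⟨_, (π, m), hm, by simp [hw],
    (fmPred_switchFilter π Γ).symm ▸ ⟨m, w, hm, hw⟩, hcount⟩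

theorem lastSwitchBitsP_eq_of_swSeq_eq {Δ Γ : Run} (h : swSeq π Δ = swSeq π Γ) :
    lastSwitchBitsP π Δ = lastSwitchBitsP π Γ := by
  have hHN := hasNth_SwSetP_congr π h
  have hc : (SwSetP π Δ).Finite ∧ (SwSetP π Δ).Nonempty ↔
      (SwSetP π Γ).Finite ∧ (SwSetP π Γ).Nonempty := by
    simp only [finite_iff_exists_not_hasNth, ← hasNth_zero_iff_nonempty, hHN]
  by_cases hΓ : (SwSetP π Γ).Finite ∧ (SwSetP π Γ).Nonempty
  · have hΔ := hc.2 hΓ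
    apply Option.some_inj.1
    rw [← get?_swSeq_ncard_sub_one π hΔ.1 hΔ.2, ← get?_swSeq_ncard_sub_one π hΓ.1 hΓ.2, h,
      ncard_eq_of_hasNth_iff hHN]
  · rw [lastSwitchBitsP, if_neg (mt hc.1 hΓ), lastSwitchBitsP, if_neg hΓ]

theorem SwSetP_finite_iff_of_swSeq_eq {Δ Γ : Run} (h : swSeq π Δ = swSeq π Γ) :
    (SwSetP π Δ).Finite ↔ (SwSetP π Γ).Finite := by
  simp only [finite_iff_exists_not_hasNth, hasNth_SwSetP_congr π h]

end Switch

theorem swSeq_eq_of_subseqOf_eq {π : Player} {Δ Γ : Run} (h : subseqOf π Δ = subseqOf π Γ) :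
    swSeq π Δ = swSeq π Γ := by
  rw [swSeq_eq_seqFilterMap_subseqOf, swSeq_eq_seqFilterMap_subseqOf, h]

namespace Stream'.Seq

variable {α : Type*}

theorem take_ofList (L : List α) (n : ℕ) : (ofList L).take n = L.take n :=
  List.ext_getElem? fun i => by by_cases h : i < n <;> simp [h, ofList_get?]

theorem take_take (s : Seq α) (m n : ℕ) : (s.take n).take m = s.take (min m n) :=
  List.ext_getElem? fun i => by by_cases h : i < m <;> by_cases h' : i < n <;> simp [h, h']

theorem take_succ_of_get?_eq_none {s : Seq α} {n : ℕ} (h : s.get? n = none) :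
    s.take (n + 1) = s.take n :=
  List.ext_getElem? fun i => by
    rcases lt_trichotomy i n with hi | rfl | hi
    · simp [hi, hi.trans (Nat.lt_succ_self n)]
    · simp [h]
    · simp [hi.not_gt, (Nat.succ_le_of_lt hi).not_gt]

end Stream'.Seq

namespace Game

variable {A : Game}

theorem IllegalBy.player_eq {ρ σ : Player} {Γ : Run} (hρ : A.IllegalBy ρ Γ)
    (hσ : A.IllegalBy σ Γ) : ρ = σ := by
  obtain ⟨n, hmin, hbad, m, hm⟩ := hρ
  obtain ⟨n', hmin', hbad', m', hm'⟩ := hσ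
  rcases lt_trichotomy n n' with h | rfl | h
  · exact absurd (hmin' (n + 1) h) hbad
  · rw [hm] at hm'
    exact (Prod.ext_iff.1 (Option.some_inj.1 hm')).1
  · exact absurd (hmin (n' + 1) h) hbad'

theorem not_illegalBy_of_legal_take {ρ : Player} {Γ : Run}
    (h : ∀ n, A.legal (Stream'.Seq.ofList (Γ.take n))) : ¬ A.IllegalBy ρ Γ :=
  fun ⟨n, _, hbad, _⟩ => hbad (h (n + 1))

theorem wins_eq_of_won {π : Player} {Γ : Run}
    (h : ∀ n, A.legal (Stream'.Seq.ofList (Γ.take n))) (hw : A.won π Γ) : A.wins Γ = π :=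
  hw.elim And.right fun hill => absurd hill (not_illegalBy_of_legal_take h)

theorem IsGame.exists_illegalBy (hA : A.IsGame) {Γ : Run} (h : ¬ A.legal Γ) :
    ∃ ρ, A.IllegalBy ρ Γ := by
  have hex : ∃ n, ¬ A.legal (Stream'.Seq.ofList (Γ.take (n + 1))) := by
    by_contra! hc
    exact h ((hA.2 Γ).2 fun | 0 => hA.1 | n + 1 => hc n)
  have hmin : ∀ m ≤ Nat.find hex, A.legal (Stream'.Seq.ofList (Γ.take m)) := fun
    | 0, _ => hA.1
    | _ + 1, hm => not_not.1 (Nat.find_min hex hm)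
  obtain ⟨⟨ρ, m⟩, hget⟩ : ∃ lm, Γ.get? (Nat.find hex) = some lm := by
    rcases hget : Γ.get? (Nat.find hex) with _ | lm
    · have hlegal := hmin _ le_rfl
      rw [← Stream'.Seq.take_succ_of_get?_eq_none hget] at hlegal
      exact absurd hlegal (Nat.find_spec hex)
    · exact ⟨lm, rfl⟩
  exact ⟨ρ, Nat.find hex, hmin, Nat.find_spec hex, m, hget⟩

theorem IsGame.won_top_iff_not_won_bot (hA : A.IsGame) {Γ : Run} :
    A.won .top Γ ↔ ¬ A.won .bot Γ := by
  have hpre := (hA.2 Γ).1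
  constructor
  · rintro (⟨hl, hw⟩ | hill) (⟨hl', hw'⟩ | hill')
    · exact Player.noConfusion (hw.symm.trans hw')
    · exact not_illegalBy_of_legal_take (hpre hl) hill'
    · exact not_illegalBy_of_legal_take (hpre hl') hill
    · exact Player.noConfusion (hill.player_eq hill')
  · intro h
    by_cases hl : A.legal Γ
    · cases hw : A.wins Γ
      · exact Or.inl ⟨hl, hw⟩
      · exact absurd (Or.inl ⟨hl, hw⟩) h
    · obtain ⟨_ | _, hρ⟩ := hA.exists_illegalBy hl
      · exact absurd (Or.inr hρ) h
      · exact Or.inr hρ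

theorem Static.not_won_bot_of_delay (hAs : A.Static) (hA : A.IsGame) {Δ Γ : Run}
    (hd : Delay .top Δ Γ) (h : ¬ A.won .bot Γ) : ¬ A.won .bot Δ :=
  hA.won_top_iff_not_won_bot.1 (hAs .top Γ Δ hd (hA.won_top_iff_not_won_bot.2 h))

end Game

section Tight

variable {A : Game} {Γ : Run}

theorem tight_legal_ofList_take (hΓ : (tight A).legal Γ) (n : ℕ) :
    (tight A).legal (Stream'.Seq.ofList (Γ.take n)) := fun m => by
  rw [Stream'.Seq.take_ofList, Stream'.Seq.take_take]
  exact hΓ _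

theorem tight_wins_eq_bot_iff :
    (tight A).wins Γ = .bot ↔
      (SwSetP .bot Γ).Finite ∧ A.won .bot (subAt (tStream Γ) Γ) := by
  simp only [tight]
  split_ifs with h <;> simp [h]

theorem tight_wins_eq_top_iff :
    (tight A).wins Γ = .top ↔
      ¬ ((SwSetP .bot Γ).Finite ∧ A.won .bot (subAt (tStream Γ) Γ)) := by
  simp only [tight]
  split_ifs with h <;> simp [h]

theorem tStream_eq_of_subseqOf_eq {Δ : Run} (h : subseqOf .bot Δ = subseqOf .bot Γ) :
    tStream Δ = tStream Γ := by
  rw [tStream, tStream, lastSwitchBitsP_eq_of_swSeq_eq _ (swSeq_eq_of_subseqOf_eq h)]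

theorem tight_wins_of_delay (hA : A.IsGame) (hAs : A.Static) {π : Player} {Δ : Run}
    (hd : Delay π Δ Γ) (hw : (tight A).wins Γ = π) : (tight A).wins Δ = π := by
  have hfin := SwSetP_finite_iff_of_swSeq_eq _ (swSeq_eq_of_subseqOf_eq (hd.1 .bot))
  have ht := tStream_eq_of_subseqOf_eq (hd.1 .bot)
  have hsub := hd.subAt (tStream Γ)
  cases π with
  | bot =>
    obtain ⟨hf, hwon⟩ := tight_wins_eq_bot_iff.1 hw
    exact tight_wins_eq_bot_iff.2 ⟨hfin.2 hf, ht ▸ hAs .bot _ _ hsub hwon⟩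
  | top =>
    refine tight_wins_eq_top_iff.2 fun ⟨hf, hwon⟩ => ?_
    refine tight_wins_eq_top_iff.1 hw ⟨hfin.1 hf, by_contra fun hn => ?_⟩
    exact hAs.not_won_bot_of_delay hA hsub hn (ht ▸ hwon)

end Tight

/-- Let `A` be a static constant game and let `Γ`, `Δ` be legal
runs of `⫰ᵀA` with `Δ` a `π`-delay of `Γ`. If `Γ` is a `π`-won run of `⫰ᵀA`, then
so is `Δ`. -/
theorem tight_won_of_delay (A : Game) (hA : A.IsGame) (hAs : A.Static)
    (π : Player) (Γ Δ : Run)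
    (hΓ : (tight A).legal Γ) (hΔ : (tight A).legal Δ) (hd : Delay π Δ Γ)
    (hw : (tight A).won π Γ) :
    (tight A).won π Δ :=
  Or.inl ⟨hΔ, tight_wins_of_delay hA hAs hd
    (Game.wins_eq_of_won (tight_legal_ofList_take hΓ) hw)⟩
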